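/- In the Loidreau–Overbeck setting, assume rk_F(λ_(n−t−k)(E)_a⃗) = t. Then the F-row space of the decoding matrix L equals the F-row space of the matrix obtained by stacking λ_(n−t−1)(β)_a⃗ on top of λ_(n−t−k)(E)_a⃗. -/

import Mathlib

namespace Stmt3

/-- `genNorm σ a i = σ^(i-1)(a) ⋯ σ(a) · a`, the generalized power function `N_i(a)`. -/
def genNorm {F : Type} [Field F] (σ : F ≃+* F) (a : F) : ℕ → F
  | 0 => 1
  | i + 1 => (⇑σ)^[i] a * genNorm σ a i

/-- Generalized operator `D_a^i(b) = σ^i(b) · N_i(a)` for `i ∈ ℕ`. -/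
def opev {F : Type} [Field F] (σ : F ≃+* F) (a b : F) (i : ℕ) : F :=
  (⇑σ)^[i] b * genNorm σ a i

/-- `b` is σ-conjugate to `a`, i.e. `b = σ(c)·a·c⁻¹` for some nonzero `c`. -/
def SConj {F : Type} [Field F] (σ : F ≃+* F) (a b : F) : Prop :=
  ∃ c : F, c ≠ 0 ∧ b = σ c * a * c⁻¹

/-- σ-generalized Moore matrix `λ_d(x)_a⃗` w.r.t. the length partition `nn`:
its row `r` applies `D_{a_i}^r` entrywise to the `i`-th block of `x`. -/
def moore {F : Type} [Field F] (σ : F ≃+* F) {ℓ : ℕ} (nn : Fin ℓ → ℕ) (aa : Fin ℓ → F)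
    (d : ℕ) (x : (Σ i : Fin ℓ, Fin (nn i)) → F) :
    Matrix (Fin d) (Σ i : Fin ℓ, Fin (nn i)) F :=
  Matrix.of fun r p => opev σ (aa p.1) (x p) (r : ℕ)

/-- `λ_d(X)_a⃗` for a matrix `X`: the stack of `λ_d(x_j)_a⃗` over the rows of `X`. -/
def mooreMat {F : Type} [Field F] (σ : F ≃+* F) {ℓ : ℕ} (nn : Fin ℓ → ℕ) (aa : Fin ℓ → F)
    {s : ℕ} (d : ℕ) (X : Matrix (Fin s) (Σ i : Fin ℓ, Fin (nn i)) F) :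
    Matrix (Fin s × Fin d) (Σ i : Fin ℓ, Fin (nn i)) F :=
  Matrix.of fun r p => opev σ (aa p.1) (X r.1 p) (r.2 : ℕ)

/-- `rk_q` of a vector: the `K`-dimension of the `K`-span of its entries. -/
noncomputable def rkq (K : Type) [Field K] {F : Type} [Field F] [Algebra K F] {ι : Type}
    (v : ι → F) : ℕ :=
  Module.finrank K (Submodule.span K (Set.range v))

/-- `rk_q` of a matrix: the `K`-dimension of the `K`-span of its columns. -/
noncomputable def rkqMat (K : Type) [Field K] {F : Type} [Field F] [Algebra K F]
    {s : ℕ} {ι : Type} (X : Matrix (Fin s) ι F) : ℕ :=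
  Module.finrank K (Submodule.span K (Set.range fun j : ι => fun r : Fin s => X r j))

/-- Sum-rank weight of a blockwise vector. -/
noncomputable def wtV (K : Type) [Field K] {F : Type} [Field F] [Algebra K F] {ℓ : ℕ}
    (nn : Fin ℓ → ℕ) (x : (Σ i : Fin ℓ, Fin (nn i)) → F) : ℕ :=
  ∑ i, rkq K fun μ : Fin (nn i) => x ⟨i, μ⟩

/-- Sum-rank weight of a blockwise matrix. -/
noncomputable def wtM (K : Type) [Field K] {F : Type} [Field F] [Algebra K F] {s ℓ : ℕ}
    (nn : Fin ℓ → ℕ) (X : Matrix (Fin s) (Σ i : Fin ℓ, Fin (nn i)) F) : ℕ :=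
  ∑ i, rkqMat K (Matrix.of fun (r : Fin s) (μ : Fin (nn i)) => X r ⟨i, μ⟩)

/-- Codeword `C(M) = M · λ_k(β)_a⃗` of the `s`-interleaved linearized Reed–Solomon code. -/
def codeword {F : Type} [Field F] (σ : F ≃+* F) {ℓ : ℕ} (nn : Fin ℓ → ℕ) (aa : Fin ℓ → F)
    (β : (Σ i : Fin ℓ, Fin (nn i)) → F) {s : ℕ} (k : ℕ) (M : Matrix (Fin s) (Fin k) F) :
    Matrix (Fin s) (Σ i : Fin ℓ, Fin (nn i)) F :=
  M * moore σ nn aa k β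

/-- Loidreau–Overbeck decoding matrix: the stack of `λ_{n-t-1}(β)_a⃗` and
`λ_{n-t-k}(r_j)_a⃗` for the rows `r_j` of `R`. -/
def LOmat {F : Type} [Field F] (σ : F ≃+* F) {ℓ : ℕ} (nn : Fin ℓ → ℕ) (aa : Fin ℓ → F)
    (β : (Σ i : Fin ℓ, Fin (nn i)) → F) {s : ℕ}
    (R : Matrix (Fin s) (Σ i : Fin ℓ, Fin (nn i)) F) (n t k : ℕ) :
    Matrix (Fin (n - t - 1) ⊕ Fin s × Fin (n - t - k)) (Σ i : Fin ℓ, Fin (nn i)) F :=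
  Matrix.of fun r p =>
    match r with
    | Sum.inl u => opev σ (aa p.1) (β p) (u : ℕ)
    | Sum.inr ju => opev σ (aa p.1) (R ju.1 p) (ju.2 : ℕ)

/-!
Writing `R = M · λ_k(β)_a⃗ + E`, the twisted composition rule
`D_a^u(x · D_a^c(b)) = σ^u(x) · D_a^(u+c)(b)` shows that row `u` of `λ_(n−t−k)(r_j)_a⃗` is row `u` of
`λ_(n−t−k)(e_j)_a⃗` plus an `F`-combination of rows `u, …, u+k−1` of `λ_(n−t−1)(β)_a⃗`. Since
`u + k − 1 ≤ n − t − 2`, these rows belong to both stacked matrices, so the two are related by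
invertible row operations.
-/

section Span

open Submodule Set

variable {R M ι κ : Type*} [Ring R] [AddCommGroup M] [Module R M]

theorem span_range_le_of_inr_sub_mem {v w : ι ⊕ κ → M} (hinl : ∀ i, v (.inl i) = w (.inl i))
    (hinr : ∀ j, v (.inr j) - w (.inr j) ∈ span R (range (w ∘ Sum.inl))) :
    span R (range v) ≤ span R (range w) := by
  rw [span_le]
  rintro _ ⟨i | j, rfl⟩
  · exact hinl i ▸ subset_span ⟨.inl i, rfl⟩
  · rw [← sub_add_cancel (v (.inr j)) (w (.inr j))]
    exact add_mem (span_mono (range_comp_subset_range _ _) (hinr j)) (subset_span ⟨.inr j, rfl⟩)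

theorem span_range_eq_of_inr_sub_mem {v w : ι ⊕ κ → M} (hinl : ∀ i, v (.inl i) = w (.inl i))
    (hinr : ∀ j, v (.inr j) - w (.inr j) ∈ span R (range (w ∘ Sum.inl))) :
    span R (range v) = span R (range w) := by
  have hcomp : w ∘ Sum.inl = v ∘ Sum.inl := funext fun i => (hinl i).symm
  refine le_antisymm (span_range_le_of_inr_sub_mem hinl hinr)
    (span_range_le_of_inr_sub_mem (fun i => (hinl i).symm) fun j => ?_)
  rw [← neg_sub, ← hcomp]
  exact neg_mem (hinr j)

end Span

section Operator

variable {F : Type} [Field F] (σ : F ≃+* F)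

theorem genNorm_add (a : F) (u c : ℕ) :
    genNorm σ a (u + c) = (⇑σ)^[u] (genNorm σ a c) * genNorm σ a u := by
  induction c with
  | zero => simp [genNorm]
  | succ c ih =>
    rw [← add_assoc, genNorm, ih, genNorm, iterate_map_mul, ← Function.iterate_add_apply]
    ring

theorem opev_add (a b b' : F) (u : ℕ) :
    opev σ a (b + b') u = opev σ a b u + opev σ a b' u := by
  simp only [opev, iterate_map_add, add_mul]

theorem opev_sum {ι : Type} (s : Finset ι) (a : F) (f : ι → F) (u : ℕ) :
    opev σ a (∑ c ∈ s, f c) u = ∑ c ∈ s, opev σ a (f c) u := by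
  simp only [opev, ← RingAut.coe_pow, map_sum, Finset.sum_mul]

theorem opev_mul_opev (a x b : F) (u c : ℕ) :
    opev σ a (x * opev σ a b c) u = (⇑σ)^[u] x * opev σ a b (u + c) := by
  simp only [opev, iterate_map_mul, genNorm_add, ← Function.iterate_add_apply]
  ring

end Operator

theorem LOmat_inr_codeword_add_sub {F : Type} [Field F] (σ : F ≃+* F) {ℓ : ℕ}
    (nn : Fin ℓ → ℕ) (aa : Fin ℓ → F) (β : (Σ i : Fin ℓ, Fin (nn i)) → F) {s k : ℕ} (n t : ℕ)
    (M : Matrix (Fin s) (Fin k) F) (E : Matrix (Fin s) (Σ i : Fin ℓ, Fin (nn i)) F)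
    (ju : Fin s × Fin (n - t - k)) :
    LOmat σ nn aa β (codeword σ nn aa β k M + E) n t k (.inr ju)
        - LOmat σ nn aa β E n t k (.inr ju)
      = ∑ c : Fin k, (⇑σ)^[ju.2] (M ju.1 c) •
          LOmat σ nn aa β E n t k (.inl ⟨ju.2 + c, by omega⟩) := by
  funext p
  simp only [LOmat, codeword, moore, Matrix.of_apply, Matrix.add_apply, Matrix.mul_apply,
    opev_add, opev_sum, opev_mul_opev, add_sub_cancel_right, Pi.sub_apply, Finset.sum_apply,
    Pi.smul_apply, smul_eq_mul]

theorem LO_rowspace_eq_general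
    {F : Type} [Field F]
    (σ : F ≃+* F)
    {ℓ : ℕ} (nn : Fin ℓ → ℕ) (aa : Fin ℓ → F)
    (β : (Σ i : Fin ℓ, Fin (nn i)) → F)
    {s : ℕ} {k n t : ℕ}
    (M : Matrix (Fin s) (Fin k) F)
    (E R : Matrix (Fin s) (Σ i : Fin ℓ, Fin (nn i)) F)
    (hR : R = codeword σ nn aa β k M + E)
    :
    Submodule.span F (Set.range fun r => LOmat σ nn aa β R n t k r)
      = Submodule.span F (Set.range fun r => LOmat σ nn aa β E n t k r) := by
  subst hR
  refine span_range_eq_of_inr_sub_mem (fun _ => rfl) fun ju => ?_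
  rw [LOmat_inr_codeword_add_sub]
  exact Submodule.sum_mem _ fun c _ => Submodule.smul_mem _ _ (Submodule.subset_span ⟨_, rfl⟩)

/-- Row space of the Loidreau–Overbeck decoding matrix.
If `rk_F(λ_{n−t−k}(E)_a⃗) = t`, then the `F`-row space of the decoding matrix `L`
equals the `F`-row space of the stack of `λ_{n−t−1}(β)_a⃗` on top of `λ_{n−t−k}(E)_a⃗`. -/
theorem LO_rowspace_eq
    {K F : Type} [Field K] [Field F] [Algebra K F] [Fintype K] [Fintype F]
    (σ : F ≃+* F)
    (hfix : ∀ x : F, σ x = x ↔ x ∈ Set.range (algebraMap K F))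
    {ℓ : ℕ} (hℓ : 1 ≤ ℓ) (nn : Fin ℓ → ℕ) (aa : Fin ℓ → F)
    (ha0 : ∀ i, aa i ≠ 0)
    (haconj : ∀ i j : Fin ℓ, i ≠ j → ¬ SConj σ (aa i) (aa j))
    (β : (Σ i : Fin ℓ, Fin (nn i)) → F)
    (hβ : ∀ i, LinearIndependent K fun μ : Fin (nn i) => β ⟨i, μ⟩)
    {s : ℕ} (hs : 1 ≤ s) {k n t : ℕ} (hn : n = ∑ i, nn i)
    (hk : 1 ≤ k) (hkn : k ≤ n)
    (M : Matrix (Fin s) (Fin k) F)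
    (E R : Matrix (Fin s) (Σ i : Fin ℓ, Fin (nn i)) F)
    (hR : R = codeword σ nn aa β k M + E)
    (ht : wtM K nn E = t) (htnk : t ≤ n - k)
    (hrk : (mooreMat σ nn aa (n - t - k) E).rank = t)
    :
    Submodule.span F (Set.range fun r => LOmat σ nn aa β R n t k r)
      = Submodule.span F (Set.range fun r => LOmat σ nn aa β E n t k r) :=
  LO_rowspace_eq_general σ nn aa β M E R hR

end Stmt3
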